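/- Let n ≥ 2 and let Γ ⊆ ℝⁿ be an open symmetric cone contained in the 2-positive cone Γ₂ⁿ, such that w + v ∈ Γ whenever w ∈ Γ and v ∈ ℝⁿ has all entries nonnegative, and such that e := (0,1,…,1) ∈ Γ. Let f : Γ → ℝ be continuous, positive, symmetric, strictly increasing in each argument, and positively homogeneous of degree one; set c₁ := f(e)⁻¹. Let Γ₀ be a cone whose closure with the origin removed is contained in Γ, and let ε > 0. Then there exists c > 0 such that every z ∈ Γ₀ ∖ {0} with z₁ ≤ z₂ ≤ … ≤ z_n and −z₁ ≥ ε f(z) satisfies −z₁ ≤ c (z_n − c₁ f(z)). -/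

import Mathlib

/-- Quantitative convexity from the `1`-cylindrical estimate: wherever
`−κ₁ ≥ ε F` one has `−κ₁ ≤ c (κ_n − c₁ F)` on a compactly contained subcone. -/
theorem convexity_from_one_cylindrical_estimate
    (n : ℕ) (hn : 2 ≤ n)
    (Γ : Set (Fin n → ℝ))
    (hΓ_open : IsOpen Γ)
    (hΓ_cone : ∀ c : ℝ, 0 < c → ∀ z ∈ Γ, c • z ∈ Γ)
    (hΓ_symm : ∀ σ : Equiv.Perm (Fin n), ∀ z ∈ Γ, (fun i => z (σ i)) ∈ Γ)
    (hΓ_sub : ∀ z ∈ Γ, ∀ S : Finset (Fin n), S.card = 2 → 0 < ∑ i ∈ S, z i)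
    (hΓ_up : ∀ w ∈ Γ, ∀ v : Fin n → ℝ, (∀ i, 0 ≤ v i) → w + v ∈ Γ)
    (heΓ : (fun i : Fin n => if (i : ℕ) = 0 then (0 : ℝ) else 1) ∈ Γ)
    (f : (Fin n → ℝ) → ℝ)
    (hf_cont : ContinuousOn f Γ)
    (hf_pos : ∀ z ∈ Γ, 0 < f z)
    (hf_symm : ∀ σ : Equiv.Perm (Fin n), ∀ z ∈ Γ, f (fun i => z (σ i)) = f z)
    (hf_mono : ∀ w ∈ Γ, ∀ t : ℝ, 0 < t → ∀ i : Fin n,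
        w + Pi.single i t ∈ Γ → f w < f (w + Pi.single i t))
    (hf_hom : ∀ c : ℝ, 0 < c → ∀ z ∈ Γ, f (c • z) = c * f z)
    (Γ₀ : Set (Fin n → ℝ))
    (hΓ₀_cone : ∀ c : ℝ, 0 < c → ∀ z ∈ Γ₀, c • z ∈ Γ₀)
    (hΓ₀_sub : closure Γ₀ \ ({0} : Set (Fin n → ℝ)) ⊆ Γ)
    (ε : ℝ) (hε : 0 < ε) :
    ∃ c : ℝ, 0 < c ∧ ∀ z ∈ Γ₀, z ≠ 0 → Monotone z →
      ε * f z ≤ -z ⟨0, by omega⟩ →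
      -z ⟨0, by omega⟩ ≤
        c * (z ⟨n - 1, by omega⟩ -
          (f (fun i : Fin n => if (i : ℕ) = 0 then (0 : ℝ) else 1))⁻¹ * f z) := by
  classical
  have h0n : 0 < n := by omega
  set i0 : Fin n := ⟨0, by omega⟩ with hi0
  set il : Fin n := ⟨n - 1, by omega⟩ with hil
  set e : Fin n → ℝ := fun i : Fin n => if (i : ℕ) = 0 then (0 : ℝ) else 1 with he
  have hfe : 0 < f e := hf_pos e heΓ
  set c₁ : ℝ := (f e)⁻¹ with hc₁
  -- sums of nonnegative single bumps are nonnegative pointwise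
  have hnn : ∀ v : Fin n → ℝ, (∀ i, 0 ≤ v i) → ∀ S : Finset (Fin n),
      ∀ i, 0 ≤ (∑ j ∈ S, Pi.single j (v j)) i := by
    intro v hv S i
    rw [Finset.sum_apply]
    refine Finset.sum_nonneg fun j _ => ?_
    rcases eq_or_ne i j with rfl | h
    · simp [hv i]
    · simp [Pi.single_apply, h]
  -- monotonicity under adding nonnegative vectors
  have subA : ∀ z ∈ Γ, ∀ v : Fin n → ℝ, (∀ i, 0 ≤ v i) → f z ≤ f (z + v) := by
    intro z hz v hv
    have key : ∀ S : Finset (Fin n), f z ≤ f (z + ∑ j ∈ S, Pi.single j (v j)) := by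
      intro S
      induction S using Finset.induction with
      | empty => simp
      | @insert a S hx ih =>
        rw [Finset.sum_insert hx]
        set w := z + ∑ j ∈ S, Pi.single j (v j) with hw
        have hwΓ : w ∈ Γ := hΓ_up z hz _ (hnn v hv S)
        have heq : z + (Pi.single a (v a) + ∑ j ∈ S, Pi.single j (v j))
            = w + Pi.single a (v a) := by rw [hw]; abel
        rw [heq]
        rcases eq_or_lt_of_le (hv a) with h | h
        · rw [← h]; simpa using ih
        · have hmem : w + Pi.single a (v a) ∈ Γ := by
            refine hΓ_up w hwΓ _ fun i => ?_
            rcases eq_or_ne i a with rfl | hia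
            · simp [hv i]
            · simp [Pi.single_apply, hia]
          exact le_trans ih (le_of_lt (hf_mono w hwΓ (v a) h a hmem))
    have := key Finset.univ
    rwa [Finset.univ_sum_single] at this
  -- the key strict inequality
  have subB : ∀ z ∈ Γ, Monotone z → z i0 < 0 → f z < z il * f e := by
    intro z hz hm h0
    set a := z il with hadef
    have hle : ∀ i, z i ≤ a := by
      intro i
      exact hm (by rw [Fin.le_def]; simp [hil]; omega)
    have hane : i0 ≠ il := by
      simp only [hi0, hil, Fin.mk.injEq, ne_eq]
      omega
    have hapos : 0 < a := by
      have hcard : ({i0, il} : Finset (Fin n)).card = 2 := by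
        rw [Finset.card_insert_of_notMem (by simpa using hane), Finset.card_singleton]
      have := hΓ_sub z hz {i0, il} hcard
      rw [Finset.sum_insert (by simpa using hane), Finset.sum_singleton] at this
      linarith
    -- step 1: raise the first coordinate to 0
    have hz'Γ : z + Pi.single i0 (-z i0) ∈ Γ := by
      refine hΓ_up z hz _ fun i => ?_
      rcases eq_or_ne i i0 with rfl | hia
      · simp; linarith
      · simp [Pi.single_apply, hia]
    have h1 : f z < f (z + Pi.single i0 (-z i0)) :=
      hf_mono z hz (-z i0) (by linarith) i0 hz'Γ
    -- step 2: raise the remaining coordinates to a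
    have h2 : f (z + Pi.single i0 (-z i0)) ≤ f (a • e) := by
      have hvnn : ∀ i, 0 ≤ ((a • e - (z + Pi.single i0 (-z i0)) : Fin n → ℝ)) i := by
        intro i
        rcases eq_or_ne i i0 with rfl | hia
        · simp [he, hi0]
        · have : (i : ℕ) ≠ 0 := by
            simpa [hi0, Fin.ext_iff] using hia
          simp [he, Pi.single_apply, hia, this]
          exact hle i
      have := subA _ hz'Γ _ hvnn
      simpa using this
    have h3 : f (a • e) = a * f e := hf_hom a hapos e heΓ
    linarith
  -- the compact set
  set C : Set (Fin n → ℝ) :=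
    closure Γ₀ ∩ Metric.sphere 0 1 ∩ {z | Monotone z} with hC
  have hmon_closed : IsClosed {z : Fin n → ℝ | Monotone z} := by
    have : {z : Fin n → ℝ | Monotone z} =
        ⋂ (p : Fin n × Fin n) (_ : p.1 ≤ p.2), {z | z p.1 ≤ z p.2} := by
      ext z
      simp only [Set.mem_setOf_eq, Set.mem_iInter]
      exact ⟨fun h p hp => h hp, fun h i j hij => h (i, j) hij⟩
    rw [this]
    exact isClosed_iInter fun p => isClosed_iInter fun _ =>
      isClosed_le (continuous_apply p.1) (continuous_apply p.2)
  have hC_closed : IsClosed C :=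
    (isClosed_closure.inter Metric.isClosed_sphere).inter hmon_closed
  have hC_cpt : IsCompact C := by
    refine Metric.isCompact_of_isClosed_isBounded hC_closed ?_
    exact (Metric.isBounded_sphere (x := (0 : Fin n → ℝ)) (r := 1)).subset
      fun z hz => hz.1.2
  have hCsub : C ⊆ Γ := by
    intro z hz
    refine hΓ₀_sub ⟨hz.1.1, ?_⟩
    have : ‖z‖ = 1 := by simpa using hz.1.2
    simp only [Set.mem_singleton_iff]
    intro h
    rw [h] at this; simp at this
  set φ : (Fin n → ℝ) → ℝ := fun z => ε * f z + z i0 with hφ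
  have hφ_cont : ContinuousOn φ C :=
    ((continuousOn_const.mul (hf_cont.mono hCsub)).add
      (continuous_apply i0).continuousOn)
  set K : Set (Fin n → ℝ) := C ∩ φ ⁻¹' Set.Iic 0 with hK
  have hK_closed : IsClosed K :=
    hφ_cont.preimage_isClosed_of_isClosed hC_closed isClosed_Iic
  have hK_cpt : IsCompact K := hC_cpt.of_isClosed_subset hK_closed Set.inter_subset_left
  have hKsub : K ⊆ Γ := fun z hz => hCsub hz.1
  set h : (Fin n → ℝ) → ℝ := fun z => z il - c₁ * f z with hh
  have hh_cont : ContinuousOn h K :=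
    ((continuous_apply il).continuousOn.sub
      (continuousOn_const.mul (hf_cont.mono hKsub)))
  -- positivity of h on K
  have hhpos : ∀ z ∈ K, 0 < h z := by
    intro z hzK
    have hzΓ : z ∈ Γ := hKsub hzK
    have hmz : Monotone z := hzK.1.2
    have hφz : ε * f z + z i0 ≤ 0 := hzK.2
    have h0 : z i0 < 0 := by
      have := hf_pos z hzΓ
      nlinarith
    have := subB z hzΓ hmz h0
    have : c₁ * f z < z il := by
      rw [hc₁]
      rw [inv_mul_lt_iff₀ hfe]
      linarith [this]
    simp only [hh]
    linarith
  -- scaling into K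
  have hscale : ∀ z ∈ Γ₀, z ≠ 0 → Monotone z → ε * f z ≤ -z i0 → ‖z‖⁻¹ • z ∈ K := by
    intro z hz hne hmz hineq
    have hzΓ : z ∈ Γ := hΓ₀_sub ⟨subset_closure hz, by simpa using hne⟩
    have hr : (0 : ℝ) < ‖z‖ := norm_pos_iff.mpr hne
    have hrinv : (0 : ℝ) < ‖z‖⁻¹ := inv_pos.mpr hr
    refine ⟨⟨⟨subset_closure (hΓ₀_cone _ hrinv z hz), ?_⟩, ?_⟩, ?_⟩
    · simp only [Metric.mem_sphere, dist_zero_right, norm_smul, norm_inv, norm_norm]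
      field_simp
    · intro i j hij
      simp only [Pi.smul_apply, smul_eq_mul]
      exact mul_le_mul_of_nonneg_left (hmz hij) hrinv.le
    · simp only [Set.mem_preimage, Set.mem_Iic, hφ]
      rw [hf_hom _ hrinv z hzΓ]
      simp only [Pi.smul_apply, smul_eq_mul]
      nlinarith
  -- conclude
  by_cases hKne : K.Nonempty
  · obtain ⟨z₀, hz₀K, hmin⟩ := hK_cpt.exists_isMinOn hKne hh_cont
    set m := h z₀ with hm
    have hmpos : 0 < m := hhpos z₀ hz₀K
    refine ⟨m⁻¹, inv_pos.mpr hmpos, ?_⟩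
    intro z hz hne hmz hineq
    have hzΓ : z ∈ Γ := hΓ₀_sub ⟨subset_closure hz, by simpa using hne⟩
    have hr : (0 : ℝ) < ‖z‖ := norm_pos_iff.mpr hne
    have hrinv : (0 : ℝ) < ‖z‖⁻¹ := inv_pos.mpr hr
    have hz'K : ‖z‖⁻¹ • z ∈ K := hscale z hz hne hmz hineq
    have hmle : m ≤ h (‖z‖⁻¹ • z) := hmin hz'K
    have hnorm1 : ‖‖z‖⁻¹ • z‖ = 1 := by
      have := hz'K.1.1.2
      simpa using this
    have habs : -(‖z‖⁻¹ • z) i0 ≤ 1 := by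
      have h1 := norm_le_pi_norm (‖z‖⁻¹ • z) i0
      rw [hnorm1, Real.norm_eq_abs] at h1
      have h2 := neg_le_abs ((‖z‖⁻¹ • z) i0)
      linarith
    have hstep : -(‖z‖⁻¹ • z) i0 ≤ m⁻¹ * h (‖z‖⁻¹ • z) := by
      have h1 : (1 : ℝ) ≤ m⁻¹ * h (‖z‖⁻¹ • z) := by
        rw [← inv_mul_cancel₀ (ne_of_gt hmpos)]
        exact mul_le_mul_of_nonneg_left hmle (inv_pos.mpr hmpos).le
      linarith
    -- unscale
    have hfz' : f (‖z‖⁻¹ • z) = ‖z‖⁻¹ * f z := hf_hom _ hrinv z hzΓ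
    simp only [hh, Pi.smul_apply, smul_eq_mul, hfz'] at hstep
    have goal' : -z i0 ≤ m⁻¹ * (z il - c₁ * f z) := by
      have h2 := mul_le_mul_of_nonneg_left hstep hr.le
      calc -z i0 = ‖z‖ * -(‖z‖⁻¹ * z i0) := by field_simp
        _ ≤ ‖z‖ * (m⁻¹ * (‖z‖⁻¹ * z il - c₁ * (‖z‖⁻¹ * f z))) := h2
        _ = m⁻¹ * (z il - c₁ * f z) := by field_simp
    exact goal'
  · refine ⟨1, one_pos, ?_⟩
    intro z hz hne hmz hineq
    exact absurd (⟨_, hscale z hz hne hmz hineq⟩ : K.Nonempty) hKne
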